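/- Suppose Ω ⊆ ℂ^d is a convex domain, H ⊆ ℂ^d is a complex affine hyperplane with H ∩ Ω = ∅, and P : ℂ^d → ℂ is a complex affine map with P^{-1}(0) = H. Then for all z₁, z₂ ∈ Ω: K_Ω(z₁, z₂) ≥ (1/2)·| log( |P(z₁)| / |P(z₂)| ) |. -/

import Mathlib

open Set Metric Filter Asymptotics

noncomputable section

abbrev Eucl (d : ℕ) : Type := EuclideanSpace ℂ (Fin d)

/-- The `i`-th standard basis vector of `ℂ^d`. -/
def stdB (d : ℕ) (i : Fin d) : Eucl d := EuclideanSpace.single i 1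

/-- `ρ : U → ℝ` is a local `C^k` defining function for `Ω` on the open set `U`. -/
def IsLocalDefining (d k : ℕ) (Ω U : Set (Eucl d)) (ρ : Eucl d → ℝ) : Prop :=
  IsOpen U ∧ ContDiffOn ℝ k ρ U ∧
  Ω ∩ U = {x | x ∈ U ∧ ρ x < 0} ∧
  ∀ ξ ∈ U, ρ ξ = 0 → fderiv ℝ ρ ξ ≠ 0

/-- `Ω` has `C^k` boundary. -/
def HasCkBoundary (d k : ℕ) (Ω : Set (Eucl d)) : Prop :=
  ∀ ξ₀ ∈ frontier Ω, ∃ (U : Set (Eucl d)) (ρ : Eucl d → ℝ),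
    ξ₀ ∈ U ∧ IsLocalDefining d k Ω U ρ

/-- `Ω` has `C^{2,α}` boundary: local `C²` defining functions with `α`-Hölder second derivative. -/
def HasC2HolderBoundary (d : ℕ) (α : ℝ) (Ω : Set (Eucl d)) : Prop :=
  ∀ ξ₀ ∈ frontier Ω, ∃ (U : Set (Eucl d)) (ρ : Eucl d → ℝ),
    ξ₀ ∈ U ∧ IsLocalDefining d 2 Ω U ρ ∧
    ∃ C : NNReal, HolderOnWith C α.toNNReal (iteratedFDeriv ℝ 2 ρ) U

/-- `Ω` (with `C²` boundary) is strongly pseudoconvex. -/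
def StronglyPseudoconvex (d : ℕ) (Ω : Set (Eucl d)) : Prop :=
  HasCkBoundary d 2 Ω ∧
  ∀ ξ ∈ frontier Ω, ∃ (U : Set (Eucl d)) (ρ : Eucl d → ℝ),
    ξ ∈ U ∧ IsLocalDefining d 2 Ω U ρ ∧
    ∀ v : Eucl d, v ≠ 0 → fderiv ℝ ρ ξ v = 0 → fderiv ℝ ρ ξ (Complex.I • v) = 0 →
      0 < iteratedFDeriv ℝ 2 ρ ξ ![v, v] +
          iteratedFDeriv ℝ 2 ρ ξ ![Complex.I • v, Complex.I • v]

/-- A domain: nonempty connected open set. -/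
def IsDomain' (d : ℕ) (Ω : Set (Eucl d)) : Prop := IsOpen Ω ∧ IsConnected Ω

/-- A convex domain: nonempty open convex set. -/
def IsConvexDomain (d : ℕ) (Ω : Set (Eucl d)) : Prop :=
  Ω.Nonempty ∧ IsOpen Ω ∧ Convex ℝ Ω

/-- Two sets are biholomorphic. -/
def Biholomorphic (d : ℕ) (Ω₁ Ω₂ : Set (Eucl d)) : Prop :=
  ∃ f g : Eucl d → Eucl d,
    DifferentiableOn ℂ f Ω₁ ∧ DifferentiableOn ℂ g Ω₂ ∧
    MapsTo f Ω₁ Ω₂ ∧ MapsTo g Ω₂ Ω₁ ∧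
    (∀ x ∈ Ω₁, g (f x) = x) ∧ (∀ y ∈ Ω₂, f (g y) = y)

/-- `δ_Ω(z)`: distance to the boundary. -/
def bddDist (d : ℕ) (Ω : Set (Eucl d)) (z : Eucl d) : ℝ := infDist z (frontier Ω)

/-- `δ_Ω(z; v)`: distance to the boundary in the complex direction `v`. -/
def bddDistDir (d : ℕ) (Ω : Set (Eucl d)) (z v : Eucl d) : ℝ :=
  infDist z (frontier Ω ∩ {w | ∃ ζ : ℂ, w = z + ζ • v})

/-- The squeezing function. -/
def squeezingFun (d : ℕ) (Ω : Set (Eucl d)) (p : Eucl d) : ℝ :=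
  sSup {r : ℝ | 0 < r ∧ ∃ f : Eucl d → Eucl d,
    InjOn f Ω ∧ DifferentiableOn ℂ f Ω ∧ f p = 0 ∧
    f '' Ω ⊆ ball (0 : Eucl d) 1 ∧ ball (0 : Eucl d) r ⊆ f '' Ω}

/-- Membership in `𝕏_d`: convex domains containing no complex affine line. -/
def InXd (d : ℕ) (Ω : Set (Eucl d)) : Prop :=
  IsConvexDomain d Ω ∧ ¬ ∃ (z v : Eucl d), v ≠ 0 ∧ ∀ ζ : ℂ, z + ζ • v ∈ Ω

/-- Convergence in the local Hausdorff topology. -/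
def LocHausTendsto (d : ℕ) (C : ℕ → Set (Eucl d)) (D : Set (Eucl d)) : Prop :=
  ∃ R₀ : ℝ, 0 < R₀ ∧ ∀ R : ℝ, R₀ ≤ R →
    Tendsto (fun n => hausdorffDist (closure (C n) ∩ closedBall (0 : Eucl d) R)
      (closure D ∩ closedBall (0 : Eucl d) R)) atTop (nhds 0)

/-- An intrinsic function on `𝕏_{d,0}`. -/
def IntrinsicFun (d : ℕ) (f : Set (Eucl d) → Eucl d → ℝ) : Prop :=
  ∀ C₁ C₂ : Set (Eucl d), ∀ x₁ x₂ : Eucl d,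
    InXd d C₁ → InXd d C₂ → x₁ ∈ C₁ → x₂ ∈ C₂ →
    (∃ φ ψ : Eucl d → Eucl d,
      DifferentiableOn ℂ φ C₁ ∧ DifferentiableOn ℂ ψ C₂ ∧
      MapsTo φ C₁ C₂ ∧ MapsTo ψ C₂ C₁ ∧
      (∀ x ∈ C₁, ψ (φ x) = x) ∧ (∀ y ∈ C₂, φ (ψ y) = y) ∧ φ x₁ = x₂) →
    f C₁ x₁ = f C₂ x₂

/-- Continuity of a function on `𝕏_{d,0}` with respect to the local Hausdorff topology. -/
def IntrinsicContinuousFun (d : ℕ) (f : Set (Eucl d) → Eucl d → ℝ) : Prop :=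
  ∀ (C : ℕ → Set (Eucl d)) (x : ℕ → Eucl d) (D : Set (Eucl d)) (y : Eucl d),
    (∀ n, InXd d (C n)) → (∀ n, x n ∈ C n) → InXd d D → y ∈ D →
    LocHausTendsto d C D → Tendsto x atTop (nhds y) →
    Tendsto (fun n => f (C n) (x n)) atTop (nhds (f D y))

/-- Upper semicontinuity of a function on `𝕏_{d,0}`. -/
def IntrinsicUSCFun (d : ℕ) (f : Set (Eucl d) → Eucl d → ℝ) : Prop :=
  ∀ (C : ℕ → Set (Eucl d)) (x : ℕ → Eucl d) (D : Set (Eucl d)) (y : Eucl d),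
    (∀ n, InXd d (C n)) → (∀ n, x n ∈ C n) → InXd d D → y ∈ D →
    LocHausTendsto d C D → Tendsto x atTop (nhds y) →
    Filter.limsup (fun n => f (C n) (x n)) atTop ≤ f D y

/-- Membership in `𝕂_d`. -/
def InKd (d : ℕ) (Ω : Set (Eucl d)) : Prop :=
  InXd d Ω ∧ ∀ i : Fin d,
    {w : Eucl d | ∃ ζ : ℂ, ‖ζ‖ < 1 ∧ w = ζ • stdB d i} ⊆ Ω ∧
    Ω ∩ {x : Eucl d | ∃ y ∈ Submodule.span ℂ (stdB d '' {j : Fin d | i < j}),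
      x = stdB d i + y} = ∅

/-- `D ∈ BlowUp(C)`. -/
def InBlowUp (d : ℕ) (C D : Set (Eucl d)) : Prop :=
  InXd d D ∧
  ∃ (x : ℕ → Eucl d) (xlim : Eucl d) (A : ℕ → (Eucl d ≃ᵃ[ℂ] Eucl d)),
    (∀ n, x n ∈ C) ∧
    (∀ K : Set (Eucl d), K ⊆ C → IsCompact K → ∀ᶠ n in atTop, x n ∉ K) ∧
    xlim ∈ D ∧
    LocHausTendsto d (fun n => (A n) '' C) D ∧
    Tendsto (fun n => A n (x n)) atTop (nhds xlim)

/-- The unit disc in `ℂ`. -/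
def unitDisc : Set ℂ := ball (0 : ℂ) 1

/-- The Poincaré distance on the unit disc. -/
def poincareDist (a b : ℂ) : ℝ :=
  (1 / 2) * Real.log ((1 + ‖(a - b) / (1 - (starRingEnd ℂ) b * a)‖) /
    (1 - ‖(a - b) / (1 - (starRingEnd ℂ) b * a)‖))

/-- The Kobayashi pseudodistance of `Ω`, defined via chains of holomorphic discs. -/
def kobayashiDist {F : Type*} [NormedAddCommGroup F] [NormedSpace ℂ F]
    (Ω : Set F) (x y : F) : ℝ :=
  sInf {r : ℝ | ∃ (m : ℕ) (a b : Fin (m + 1) → ℂ) (f : Fin (m + 1) → ℂ → F),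
    (∀ i, a i ∈ unitDisc) ∧ (∀ i, b i ∈ unitDisc) ∧
    (∀ i, DifferentiableOn ℂ (f i) unitDisc) ∧
    (∀ i, MapsTo (f i) unitDisc Ω) ∧
    f 0 (a 0) = x ∧
    (∀ i : Fin m, f i.castSucc (b i.castSucc) = f i.succ (a i.succ)) ∧
    f (Fin.last m) (b (Fin.last m)) = y ∧
    r = ∑ i, poincareDist (a i) (b i)}

/-- A geodesic ray `γ : [0,∞) → Ω` for the Kobayashi distance. -/
def IsGeodesicRay {F : Type*} [NormedAddCommGroup F] [NormedSpace ℂ F]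
    (Ω : Set F) (γ : ℝ → F) : Prop :=
  (∀ t : ℝ, 0 ≤ t → γ t ∈ Ω) ∧
  ∀ s t : ℝ, 0 ≤ s → 0 ≤ t → kobayashiDist Ω (γ s) (γ t) = |s - t|

/-- A complex geodesic `φ : 𝔻 → Ω`. -/
def IsComplexGeodesic {F : Type*} [NormedAddCommGroup F] [NormedSpace ℂ F]
    (Ω : Set F) (φ : ℂ → F) : Prop :=
  DifferentiableOn ℂ φ unitDisc ∧ MapsTo φ unitDisc Ω ∧
  ∀ z ∈ unitDisc, ∀ w ∈ unitDisc, kobayashiDist Ω (φ z) (φ w) = poincareDist z w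

/-- The upper half-plane in `ℂ`. -/
def upperHalf : Set ℂ := {z : ℂ | 0 < z.im}

/-- `u` is the inward-pointing unit normal vector of `∂Ω` at `ξ`. -/
def IsInwardUnitNormal (d : ℕ) (Ω : Set (Eucl d)) (ξ u : Eucl d) : Prop :=
  ‖u‖ = 1 ∧ ∃ (U : Set (Eucl d)) (ρ : Eucl d → ℝ),
    ξ ∈ U ∧ IsLocalDefining d 1 Ω U ρ ∧
    ∃ c : ℝ, 0 < c ∧ ∀ w : Eucl d, fderiv ℝ ρ ξ w = -c * (inner ℂ u w : ℂ).re

/-- `v` lies in the complex tangent space `T^ℂ_ξ ∂Ω`. -/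
def InComplexTangent (d : ℕ) (Ω : Set (Eucl d)) (ξ v : Eucl d) : Prop :=
  ∃ (U : Set (Eucl d)) (ρ : Eucl d → ℝ),
    ξ ∈ U ∧ IsLocalDefining d 1 Ω U ρ ∧
    fderiv ℝ ρ ξ v = 0 ∧ fderiv ℝ ρ ξ (Complex.I • v) = 0

/-- The Siegel model of the unit ball. -/
def Siegel (d : ℕ) (h : 0 < d) : Set (Eucl d) :=
  {z : Eucl d | (∑ i : Fin d, if 0 < (i : ℕ) then ‖z i‖ ^ 2 else 0)
    < (z ⟨0, h⟩).im}

/-!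
Since `Ω` is convex and open and `P` is a nonconstant affine function without zeros on `Ω`,
`P(Ω)` is an open convex subset of `ℂ \ {0}`; hence a rotation `q * P` maps `Ω` into the right
half-plane. For a holomorphic `g` from the disc to the right half-plane, the Schwarz–Pick lemma
gives `|g b - g a| ≤ δ(a, b) |g b + conj (g a)|` with `δ` the pseudo-hyperbolic distance, which
makes `½ log |g|` `1`-Lipschitz for the Poincaré distance. Along a chain of holomorphic discs in
`Ω` these estimates for `g = q * P ∘ f` telescope, so `½ |log |P z₁| - log |P z₂||` bounds every
chain length from below. Convexity also guarantees that chains exist, so the bound passes to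
their infimum.
-/

open ComplexConjugate in
def discMobius (a z : ℂ) : ℂ := (z - a) / (1 - conj a * z)

section DiscMobius

open Complex ComplexConjugate

lemma norm_div_lt_one_of_normSq_lt {x y : ℂ} (h : normSq x < normSq y) : ‖x / y‖ < 1 := by
  rw [normSq_eq_norm_sq, normSq_eq_norm_sq] at h
  have hxy : ‖x‖ < ‖y‖ := lt_of_pow_lt_pow_left₀ 2 (norm_nonneg y) h
  rw [norm_div, div_lt_one ((norm_nonneg x).trans_lt hxy)]
  exact hxy

lemma normSq_lt_one_of_mem_unitDisc {a : ℂ} (ha : a ∈ unitDisc) : normSq a < 1 := by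
  rw [unitDisc, mem_ball_zero_iff] at ha
  rw [normSq_eq_norm_sq]
  nlinarith [norm_nonneg a]

lemma normSq_one_sub_conj_mul_sub_normSq_sub (a z : ℂ) :
    normSq (1 - conj a * z) - normSq (z - a) = (1 - normSq a) * (1 - normSq z) := by
  simp only [normSq_apply, sub_re, sub_im, mul_re, mul_im, conj_re, conj_im, one_re, one_im]
  ring

lemma normSq_sub_lt_normSq_one_sub_conj_mul {a z : ℂ} (ha : a ∈ unitDisc) (hz : z ∈ unitDisc) :
    normSq (z - a) < normSq (1 - conj a * z) := by
  have := normSq_one_sub_conj_mul_sub_normSq_sub a z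
  nlinarith [normSq_lt_one_of_mem_unitDisc ha, normSq_lt_one_of_mem_unitDisc hz]

lemma discMobius_mem_unitDisc {a z : ℂ} (ha : a ∈ unitDisc) (hz : z ∈ unitDisc) :
    discMobius a z ∈ unitDisc := by
  rw [unitDisc, mem_ball_zero_iff]
  exact norm_div_lt_one_of_normSq_lt (normSq_sub_lt_normSq_one_sub_conj_mul ha hz)

lemma one_sub_conj_mul_ne_zero {a z : ℂ} (ha : a ∈ unitDisc) (hz : z ∈ unitDisc) :
    1 - conj a * z ≠ 0 := fun h => by
  have := normSq_sub_lt_normSq_one_sub_conj_mul ha hz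
  rw [h, map_zero] at this
  exact (normSq_nonneg _).not_gt this

lemma neg_mem_unitDisc {a : ℂ} (ha : a ∈ unitDisc) : -a ∈ unitDisc := by
  simpa [unitDisc] using ha

lemma differentiableOn_discMobius {a : ℂ} (ha : a ∈ unitDisc) :
    DifferentiableOn ℂ (discMobius a) unitDisc :=
  (differentiableOn_id.sub_const a).div ((differentiableOn_const 1).sub
    (differentiableOn_id.const_mul _)) fun _ hz => one_sub_conj_mul_ne_zero ha hz

lemma discMobius_neg_zero (a : ℂ) : discMobius (-a) 0 = a := by
  simp [discMobius]

lemma discMobius_neg_discMobius {a z : ℂ} (ha : a ∈ unitDisc) (hz : z ∈ unitDisc) :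
    discMobius (-a) (discMobius a z) = z := by
  have hden := one_sub_conj_mul_ne_zero ha hz
  have ha' : 1 - conj a * a ≠ 0 := by
    rw [mul_comm, mul_conj, ← ofReal_one, ← ofReal_sub, ofReal_ne_zero]
    exact (sub_pos.mpr (normSq_lt_one_of_mem_unitDisc ha)).ne'
  have hsum : 1 + conj a * discMobius a z = (1 - conj a * a) / (1 - conj a * z) := by
    rw [discMobius]; field_simp; ring
  simp only [discMobius.eq_def (-a), map_neg, neg_mul, sub_neg_eq_add, hsum]
  rw [discMobius, div_add' _ _ _ hden, div_div_div_cancel_right₀ hden, div_eq_iff ha']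
  ring

end DiscMobius

section RightHalfPlane

open Complex ComplexConjugate

lemma normSq_add_conj_sub_normSq_sub (w v : ℂ) :
    normSq (w + conj v) - normSq (w - v) = 4 * w.re * v.re := by
  simp only [normSq_apply, add_re, add_im, sub_re, sub_im, conj_re, conj_im]
  ring

lemma norm_sub_div_add_conj_lt_one {w v : ℂ} (hw : 0 < w.re) (hv : 0 < v.re) :
    ‖(w - v) / (w + conj v)‖ < 1 := by
  have := normSq_add_conj_sub_normSq_sub w v
  exact norm_div_lt_one_of_normSq_lt (by nlinarith [mul_pos hw hv])

lemma add_conj_ne_zero {w v : ℂ} (hw : 0 < w.re) (hv : 0 < v.re) : w + conj v ≠ 0 := fun h => by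
  have := congrArg re h
  simp only [add_re, conj_re, zero_re] at this
  linarith

/-- Schwarz–Pick lemma for holomorphic maps from the disc to the right half-plane. -/
theorem norm_sub_le_norm_discMobius_mul {g : ℂ → ℂ} (hg : DifferentiableOn ℂ g unitDisc)
    (hpos : ∀ ζ ∈ unitDisc, 0 < (g ζ).re) {a b : ℂ} (ha : a ∈ unitDisc) (hb : b ∈ unitDisc) :
    ‖g b - g a‖ ≤ ‖discMobius a b‖ * ‖g b + conj (g a)‖ := by
  -- `h` moves `a` to `0` in the disc and `g a` to `0` by a Cayley transform of the half-plane
  set h : ℂ → ℂ := fun ζ => (g (discMobius (-a) ζ) - g a) / (g (discMobius (-a) ζ) + conj (g a))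
  have hmaps : MapsTo (discMobius (-a)) unitDisc unitDisc := fun ζ hζ =>
    discMobius_mem_unitDisc (neg_mem_unitDisc ha) hζ
  have hgφ : DifferentiableOn ℂ (g ∘ discMobius (-a)) unitDisc :=
    hg.comp (differentiableOn_discMobius (neg_mem_unitDisc ha)) hmaps
  have hdiff : DifferentiableOn ℂ h unitDisc :=
    (hgφ.sub_const _).div (hgφ.add_const _) fun ζ hζ =>
      add_conj_ne_zero (hpos _ (hmaps hζ)) (hpos a ha)
  have hschwarz : ‖h (discMobius a b)‖ ≤ ‖discMobius a b‖ :=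
    Complex.norm_le_norm_of_mapsTo_ball hdiff
      (fun ζ hζ => mem_closedBall_zero_iff.mpr
        (norm_sub_div_add_conj_lt_one (hpos _ (hmaps hζ)) (hpos a ha)).le)
      (by simp [h, discMobius_neg_zero])
      (mem_ball_zero_iff.mp (discMobius_mem_unitDisc ha hb))
  simp only [h, discMobius_neg_discMobius ha hb, norm_div] at hschwarz
  rwa [div_le_iff₀ (norm_pos_iff.mpr (add_conj_ne_zero (hpos b hb) (hpos a ha)))] at hschwarz

end RightHalfPlane

lemma abs_log_sub_log_le {A B t : ℝ} (hA : 0 < A) (hB : 0 < B) (ht : t < 1)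
    (h : |A - B| ≤ t * (A + B)) : |Real.log A - Real.log B| ≤ Real.log ((1 + t) / (1 - t)) := by
  have key : ∀ {A B : ℝ}, 0 < A → 0 < B → A - B ≤ t * (A + B) →
      Real.log A - Real.log B ≤ Real.log ((1 + t) / (1 - t)) := fun {A B} hA hB hAB => by
    rw [← Real.log_div hA.ne' hB.ne']
    refine Real.log_le_log (div_pos hA hB) ?_
    rw [div_le_div_iff₀ hB (by linarith)]
    linarith
  rw [abs_sub_le_iff] at h ⊢
  exact ⟨key hA hB h.1, key hB hA (by linarith [h.2])⟩

open ComplexConjugate in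
theorem abs_half_log_norm_sub_le_poincareDist {g : ℂ → ℂ} (hg : DifferentiableOn ℂ g unitDisc)
    (hpos : ∀ ζ ∈ unitDisc, 0 < (g ζ).re) {a b : ℂ} (ha : a ∈ unitDisc) (hb : b ∈ unitDisc) :
    |1 / 2 * Real.log ‖g a‖ - 1 / 2 * Real.log ‖g b‖| ≤ poincareDist a b := by
  have hnorm_pos : ∀ ζ ∈ unitDisc, 0 < ‖g ζ‖ := fun ζ hζ =>
    norm_pos_iff.mpr fun h0 => by simpa [h0] using hpos ζ hζ
  set t := ‖discMobius b a‖
  have hpoincare : poincareDist a b = 1 / 2 * Real.log ((1 + t) / (1 - t)) := rfl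
  have hschwarz : |‖g a‖ - ‖g b‖| ≤ t * (‖g a‖ + ‖g b‖) :=
    calc |‖g a‖ - ‖g b‖| ≤ ‖g a - g b‖ := abs_norm_sub_norm_le _ _
      _ ≤ t * ‖g a + conj (g b)‖ := norm_sub_le_norm_discMobius_mul hg hpos hb ha
      _ ≤ t * (‖g a‖ + ‖g b‖) := by
        gcongr
        exact (norm_add_le _ _).trans_eq (by rw [Complex.norm_conj])
  rw [← mul_sub, abs_mul, abs_of_pos (by norm_num : (0 : ℝ) < 1 / 2), hpoincare]
  gcongr
  exact abs_log_sub_log_le (hnorm_pos a ha) (hnorm_pos b hb)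
    (mem_ball_zero_iff.mp (discMobius_mem_unitDisc hb ha)) hschwarz

section Kobayashi

variable {F : Type*} [NormedAddCommGroup F] [NormedSpace ℂ F]

def kobayashiChainLengths (Ω : Set F) (x y : F) : Set ℝ :=
  {r : ℝ | ∃ (m : ℕ) (a b : Fin (m + 1) → ℂ) (f : Fin (m + 1) → ℂ → F),
    (∀ i, a i ∈ unitDisc) ∧ (∀ i, b i ∈ unitDisc) ∧
    (∀ i, DifferentiableOn ℂ (f i) unitDisc) ∧
    (∀ i, MapsTo (f i) unitDisc Ω) ∧
    f 0 (a 0) = x ∧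
    (∀ i : Fin m, f i.castSucc (b i.castSucc) = f i.succ (a i.succ)) ∧
    f (Fin.last m) (b (Fin.last m)) = y ∧
    r = ∑ i, poincareDist (a i) (b i)}

lemma kobayashiDist_eq_sInf (Ω : Set F) (x y : F) :
    kobayashiDist Ω x y = sInf (kobayashiChainLengths Ω x y) := rfl

lemma abs_sub_le_sum_abs_sub_of_chain {α : Type*} (u : α → ℝ) {m : ℕ} (p q : Fin (m + 1) → α)
    (hlink : ∀ i : Fin m, q i.castSucc = p i.succ) :
    |u (p 0) - u (q (Fin.last m))| ≤ ∑ i, |u (p i) - u (q i)| := by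
  induction m with
  | zero => simp [Fin.last]
  | succ m ih =>
    have htail := ih (p ∘ Fin.succ) (q ∘ Fin.succ) fun i => by
      simpa only [Function.comp_apply, Fin.succ_castSucc] using hlink i.succ
    simp only [Function.comp_apply, Fin.succ_last, Fin.succ_zero_eq_one] at htail
    have hfirst : q 0 = p 1 := hlink 0
    rw [Fin.sum_univ_succ]
    calc |u (p 0) - u (q (Fin.last (m + 1)))|
        ≤ |u (p 0) - u (q 0)| + |u (q 0) - u (q (Fin.last (m + 1)))| := abs_sub_le _ _ _
      _ ≤ _ := by rw [hfirst]; gcongr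

theorem abs_sub_le_kobayashiDist {Ω : Set F} {x y : F} (u : F → ℝ)
    (hu : ∀ f : ℂ → F, DifferentiableOn ℂ f unitDisc → MapsTo f unitDisc Ω →
      ∀ a ∈ unitDisc, ∀ b ∈ unitDisc, |u (f a) - u (f b)| ≤ poincareDist a b)
    (hne : (kobayashiChainLengths Ω x y).Nonempty) :
    |u x - u y| ≤ kobayashiDist Ω x y := by
  rw [kobayashiDist_eq_sInf]
  refine le_csInf hne ?_
  rintro r ⟨m, a, b, f, ha, hb, hf, hfΩ, rfl, hlink, rfl, rfl⟩
  calc |u (f 0 (a 0)) - u (f (Fin.last m) (b (Fin.last m)))|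
      ≤ ∑ i, |u (f i (a i)) - u (f i (b i))| :=
        abs_sub_le_sum_abs_sub_of_chain u (fun i => f i (a i)) (fun i => f i (b i)) hlink
    _ ≤ ∑ i, poincareDist (a i) (b i) :=
        Finset.sum_le_sum fun i _ => hu (f i) (hf i) (hfΩ i) _ (ha i) _ (hb i)

lemma exists_pos_forall_add_smul_mem_of_convex {Ω : Set F} (hopen : IsOpen Ω)
    (hconv : Convex ℝ Ω) {x y : F} (hx : x ∈ Ω) (hy : y ∈ Ω) :
    ∃ ε > 0, ∀ s ∈ Icc (0 : ℝ) 1, ∀ ζ : ℂ, ‖ζ‖ < ε → x + ((s : ℂ) + ζ) • (y - x) ∈ Ω := by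
  set T : Set ℂ := (fun ζ : ℂ => x + ζ • (y - x)) ⁻¹' Ω
  have hsegment : ((↑) : ℝ → ℂ) '' Icc 0 1 ⊆ T := by
    rintro _ ⟨s, hs, rfl⟩
    simpa only [T, mem_preimage, Complex.coe_smul] using hconv.add_smul_sub_mem hx hy hs
  obtain ⟨ε, hε, hthick⟩ := (isCompact_Icc.image Complex.continuous_ofReal)
    |>.exists_thickening_subset_open (hopen.preimage (by fun_prop)) hsegment
  refine ⟨ε, hε, fun s hs ζ hζ => hthick (mem_thickening_iff.mpr ⟨s, ⟨s, hs, rfl⟩, ?_⟩)⟩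
  simpa [Complex.dist_eq] using hζ

lemma kobayashiChainLengths_nonempty_of_convex {Ω : Set F} (hopen : IsOpen Ω)
    (hconv : Convex ℝ Ω) {x y : F} (hx : x ∈ Ω) (hy : y ∈ Ω) :
    (kobayashiChainLengths Ω x y).Nonempty := by
  obtain ⟨ε, hε, hmem⟩ := exists_pos_forall_add_smul_mem_of_convex hopen hconv hx hy
  obtain ⟨m, hm⟩ := exists_nat_one_div_lt (half_pos hε)
  have hN : (0 : ℝ) < m + 1 := by positivity
  -- `m + 1` discs of radius `2 / (m + 1) < ε` centred on the segment, each joining two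
  -- consecutive subdivision points `x + (k / (m + 1)) • (y - x)` as the images of `0` and `1 / 2`
  set f : Fin (m + 1) → ℂ → F := fun k ζ => x + (((k : ℂ) + 2 * ζ) / (m + 1)) • (y - x)
  have h0 : (0 : ℂ) ∈ unitDisc := mem_ball_self one_pos
  have hhalf : (1 / 2 : ℂ) ∈ unitDisc := by norm_num [unitDisc]
  refine ⟨_, m, fun _ => 0, fun _ => 1 / 2, f, fun _ => h0, fun _ => hhalf, fun k => ?_,
    fun k ζ hζ => ?_, by simp [f], fun k => ?_, ?_, rfl⟩
  · exact (differentiableOn_const _).add (((differentiableOn_const _).add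
      (differentiableOn_id.const_mul _)).div_const _ |>.smul_const _)
  · have hk : (k : ℝ) / (m + 1) ∈ Icc (0 : ℝ) 1 := ⟨by positivity, by
      rw [div_le_one hN]; exact_mod_cast k.is_lt.le⟩
    have hsmall : ‖2 * ζ / (m + 1)‖ < ε := by
      rw [unitDisc, mem_ball_zero_iff] at hζ
      have hnorm : ‖2 * ζ / (m + 1)‖ = 2 * ‖ζ‖ / (m + 1) := by
        rw [norm_div, norm_mul, ← Nat.cast_succ, Complex.norm_natCast]; norm_num
      rw [hnorm]
      calc 2 * ‖ζ‖ / (m + 1) < 2 * (1 / (m + 1)) := by rw [mul_one_div]; gcongr; linarith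
        _ < ε := by linarith
    convert hmem _ hk _ hsmall using 3
    push_cast; ring
  · simp only [f, Fin.val_castSucc, Fin.val_succ]
    push_cast; ring_nf
  · simp only [f, Fin.val_last]
    rw [show (m : ℂ) + 2 * (1 / 2) = m + 1 by ring, div_self (Nat.cast_add_one_ne_zero m),
      one_smul, add_sub_cancel]

end Kobayashi

lemma exists_re_mul_pos_of_convex_of_isOpen {S : Set ℂ} (hconv : Convex ℝ S) (hopen : IsOpen S)
    (h0 : (0 : ℂ) ∉ S) : ∃ q : ℂ, ∀ w ∈ S, 0 < (q * w).re := by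
  obtain ⟨l, hl⟩ := geometric_hahn_banach_point_open hconv hopen h0
  refine ⟨⟨l 1, -l Complex.I⟩, fun w hw => ?_⟩
  have hdecomp : w = w.re • (1 : ℂ) + w.im • Complex.I := by
    apply Complex.ext <;> simp
  have hl_apply : l w = (⟨l 1, -l Complex.I⟩ * w : ℂ).re := by
    conv_lhs => rw [hdecomp]
    simp only [map_add, map_smul, smul_eq_mul, Complex.mul_re]
    ring
  simpa [hl_apply] using hl w hw

lemma exists_re_mul_pos_of_affineMap {E : Type*} [NormedAddCommGroup E] [NormedSpace ℂ E]
    {Ω : Set E} (hopen : IsOpen Ω) (hconv : Convex ℝ Ω) (P : E →ᵃ[ℂ] ℂ) (hP : P.linear ≠ 0)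
    (hzero : ∀ z ∈ Ω, P z ≠ 0) : ∃ q : ℂ, ∀ z ∈ Ω, 0 < (q * P z).re := by
  have himage : ⇑P '' Ω = (P 0 + ·) '' (P.linear '' Ω) := by
    rw [image_image]
    exact image_congr fun z _ => by simp [congrFun (AffineMap.decomp P) z, add_comm]
  have hconv' : Convex ℝ (⇑P '' Ω) := by
    rw [himage]
    exact (hconv.is_linear_image (P.linear.restrictScalars ℝ).isLinear).translate (P 0)
  have hopen' : IsOpen (⇑P '' Ω) := by
    rw [himage]
    exact isOpenMap_add_left (P 0) _
      (P.linear.isOpenMap_of_finiteDimensional (LinearMap.surjective hP) Ω hopen)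
  obtain ⟨q, hq⟩ := exists_re_mul_pos_of_convex_of_isOpen hconv' hopen'
    fun ⟨z, hz, h⟩ => hzero z hz h
  exact ⟨q, fun z hz => hq _ (mem_image_of_mem P hz)⟩

theorem stmt_13_general (d : ℕ) (Ω : Set (Eucl d)) (hΩ : IsConvexDomain d Ω)
    (P : Eucl d →ᵃ[ℂ] ℂ) (hP : P.linear ≠ 0)
    (H : Set (Eucl d)) (hH : H = P ⁻¹' {0}) (hHΩ : H ∩ Ω = ∅) :
    ∀ z₁ ∈ Ω, ∀ z₂ ∈ Ω,
      (1 / 2) * |Real.log (‖P z₁‖ / ‖P z₂‖)| ≤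
        kobayashiDist Ω z₁ z₂ := by
  obtain ⟨-, hopen, hconv⟩ := hΩ
  have hzero : ∀ z ∈ Ω, P z ≠ 0 := fun z hz h =>
    eq_empty_iff_forall_notMem.mp hHΩ z ⟨hH ▸ h, hz⟩
  obtain ⟨q, hq⟩ := exists_re_mul_pos_of_affineMap hopen hconv P hP hzero
  have hPdiff : Differentiable ℂ P :=
    (⟨P, P.continuous_of_finiteDimensional⟩ : Eucl d →ᴬ[ℂ] ℂ).differentiable
  intro z₁ hz₁ z₂ hz₂
  have hq0 : q ≠ 0 := by rintro rfl; simpa using hq z₁ hz₁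
  have hbound := abs_sub_le_kobayashiDist (fun z => 1 / 2 * Real.log ‖q * P z‖)
    (fun f hf hfΩ a ha b hb => abs_half_log_norm_sub_le_poincareDist
      ((hPdiff.comp_differentiableOn hf).const_mul q) (fun ζ hζ => hq _ (hfΩ hζ)) ha hb)
    (kobayashiChainLengths_nonempty_of_convex hopen hconv hz₁ hz₂)
  have hnorm : ∀ z ∈ Ω, ‖P z‖ ≠ 0 := fun z hz => norm_ne_zero_iff.mpr (hzero z hz)
  rwa [← mul_sub, abs_mul, abs_of_pos one_half_pos, norm_mul, norm_mul,
    Real.log_mul (norm_ne_zero_iff.mpr hq0) (hnorm z₁ hz₁),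
    Real.log_mul (norm_ne_zero_iff.mpr hq0) (hnorm z₂ hz₂), add_sub_add_left_eq_sub,
    ← Real.log_div (hnorm z₁ hz₁) (hnorm z₂ hz₂)] at hbound

theorem stmt_13 (d : ℕ) (hd : 1 ≤ d) (Ω : Set (Eucl d)) (hΩ : IsConvexDomain d Ω)
    (P : Eucl d →ᵃ[ℂ] ℂ) (hP : P.linear ≠ 0)
    (H : Set (Eucl d)) (hH : H = P ⁻¹' {0}) (hHΩ : H ∩ Ω = ∅) :
    ∀ z₁ ∈ Ω, ∀ z₂ ∈ Ω,
      (1 / 2) * |Real.log (‖P z₁‖ / ‖P z₂‖)| ≤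
        kobayashiDist Ω z₁ z₂ :=
  stmt_13_general d Ω hΩ P hP H hH hHΩ

end
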